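/- Let S be a finite semigroup and x, y ∈ S. If x ≤_R y and x is J-equivalent to y, then x is R-equivalent to y. -/

import Mathlib

/-- Green's R-preorder. -/
def leR {S : Type*} [Semigroup S] (s t : S) : Prop := s = t ∨ ∃ a, s = t * a
/-- Green's L-preorder. -/
def leL {S : Type*} [Semigroup S] (s t : S) : Prop := s = t ∨ ∃ a, s = a * t
/-- Green's J-preorder. -/
def leJ {S : Type*} [Semigroup S] (s t : S) : Prop :=
  leR s t ∨ leL s t ∨ ∃ a b, s = a * t * b

/-!
Write x = y a. If y ≤_J x then y = b y u for some b and a right multiple u of a (adjoin an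
identity to handle the degenerate cases). Iterating gives y = bⁿ y uⁿ for all n, and since S is
finite, uⁱ = uʲ for some i < j; then y = bⁱ y uⁱ = bⁱ y uʲ = y u^(j-i), which lies in y u S ⊆ x S.
-/

section Monoid

variable {M : Type*} [Monoid M]

theorem eq_pow_mul_mul_pow_of_eq_mul_mul {y b u : M} (h : y = b * y * u) (n : ℕ) :
    y = b ^ n * y * u ^ n := by
  induction n with
  | zero => simp
  | succ n ih =>
    calc y = b ^ n * (b * y * u) * u ^ n := by rw [← h, ← ih]
      _ = b ^ (n + 1) * y * u ^ (n + 1) := by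
          rw [pow_succ b, pow_succ' u]; simp only [mul_assoc]

theorem exists_eq_mul_mul_of_eq_mul_mul [Finite M] {y b u : M} (h : y = b * y * u) :
    ∃ v, y = y * u * v := by
  obtain ⟨i, j, hne, hij⟩ := Finite.exists_ne_map_eq_of_infinite (u ^ · : ℕ → M)
  wlog hlt : i < j generalizing i j
  · exact this j i hne.symm hij.symm (by omega)
  refine ⟨u ^ (j - i - 1), ?_⟩
  calc y = b ^ i * y * u ^ i := eq_pow_mul_mul_pow_of_eq_mul_mul h i
    _ = b ^ i * y * u ^ i * u ^ (j - i) := by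
        rw [mul_assoc (b ^ i * y), ← pow_add, Nat.add_sub_cancel' hlt.le, ← hij]
    _ = y * u ^ (j - i) := by rw [← eq_pow_mul_mul_pow_of_eq_mul_mul h i]
    _ = y * u * u ^ (j - i - 1) := by rw [mul_assoc, ← pow_succ', Nat.sub_add_cancel (by omega)]

end Monoid

section Semigroup

variable {S : Type*} [Semigroup S]

theorem leR_iff_exists_withOne {s t : S} :
    leR s t ↔ ∃ a : WithOne S, (s : WithOne S) = t * a := by
  constructor
  · rintro (rfl | ⟨a, rfl⟩)
    · exact ⟨1, (mul_one _).symm⟩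
    · exact ⟨a, WithOne.coe_mul _ _⟩
  · rintro ⟨a, h⟩
    cases a with
    | one => exact Or.inl (WithOne.coe_injective (by simpa using h))
    | coe a => exact Or.inr ⟨a, WithOne.coe_injective h⟩

theorem leR_of_leR_mul_right {s t c : S} (h : leR s (t * c)) : leR s t := by
  rcases h with rfl | ⟨a, rfl⟩
  · exact Or.inr ⟨c, rfl⟩
  · exact Or.inr ⟨c * a, mul_assoc _ _ _⟩

theorem leR_mul_of_eq_mul_mul [Finite S] {y b u : S} (h : y = b * y * u) : leR y (y * u) := by
  have : Finite (WithOne S) := inferInstanceAs (Finite (Option S))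
  obtain ⟨v, hv⟩ := exists_eq_mul_mul_of_eq_mul_mul (M := WithOne S) (b := b) (u := u)
    (by rw [← WithOne.coe_mul, ← WithOne.coe_mul, ← h])
  exact leR_iff_exists_withOne.mpr ⟨v, hv⟩

theorem leR_of_leJ_mul [Finite S] {y a : S} (h : leJ y (y * a)) : leR y (y * a) := by
  rcases h with h | (h | ⟨b, h⟩) | ⟨b, c, h⟩
  · exact h
  · exact Or.inl h
  · exact leR_mul_of_eq_mul_mul (b := b) (by rw [mul_assoc]; exact h)
  · have h' : y = b * y * (a * c) := by simpa only [mul_assoc] using h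
    exact leR_of_leR_mul_right (by simpa only [mul_assoc] using leR_mul_of_eq_mul_mul h')

end Semigroup

/-- in a finite semigroup, x ≤_R y together with x J y implies x R y. -/
theorem leR_J_imp_R (S : Type*) [Semigroup S] [Fintype S] (x y : S)
    (hR : leR x y) (hJ : leJ x y ∧ leJ y x) :
    leR x y ∧ leR y x := by
  refine ⟨hR, ?_⟩
  rcases hR with rfl | ⟨a, rfl⟩
  · exact Or.inl rfl
  · exact leR_of_leJ_mul hJ.2
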